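/- Let n ≥ 2 and let τ₁, …, τ_{n−1} be 2×2 real orthogonal matrices, with associated matrix-weighted Laplacian Q on ℝ^{2n}. Then for p ∈ ℝ^{2n}, Qp = 0 if and only if p_{i+1} = τᵢpᵢ for all i = 1,…,n−1; that is, the kernel of Q is exactly the set of configurations satisfying all the inter-agent symmetry relations encoded on the edges. -/

import Mathlib

/-!
The defect of edge `e` is `p_{e+1} - τₑ pₑ`. Since `τₑ` is orthogonal,
`pₑ - τₑᵀ p_{e+1} = -τₑᵀ (p_{e+1} - τₑ pₑ)`, so `(Qp)ᵢ` is the defect of the incoming edge minus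
`τᵢᵀ` applied to the defect of the outgoing one. Hence vanishing defects give `Qp = 0`; conversely,
`Qp = 0` propagates the vanishing of the defects along the path, starting from the first vertex,
which has no incoming edge. -/

open Filter Topology Matrix

noncomputable section

abbrev Cfg (n : ℕ) := EuclideanSpace ℝ (Fin n × Fin 2)

/-- Multiplication of a 2×2 matrix with a planar vector. -/
def mv (M : Matrix (Fin 2) (Fin 2) ℝ) (v : EuclideanSpace ℝ (Fin 2)) :
    EuclideanSpace ℝ (Fin 2) := WithLp.toLp 2 (M.mulVec v)

/-- Multiplication of a 2n×2n matrix with a configuration vector. -/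
def mvC {n : ℕ} (M : Matrix (Fin n × Fin 2) (Fin n × Fin 2) ℝ) (v : Cfg n) : Cfg n :=
  WithLp.toLp 2 (M.mulVec v)

/-- The i-th planar component of a configuration. -/
def blk {n : ℕ} (p : Cfg n) (i : Fin n) : EuclideanSpace ℝ (Fin 2) :=
  WithLp.toLp 2 (fun a => p (i, a))

/-- The action of the matrix-weighted Laplacian Q of the path graph on vertices 0, …, n-1
(with matrix weight τ e on the edge {e, e+1}):
(Qp)ᵢ = (pᵢ − τ_{i-1} p_{i-1}) + (pᵢ − τᵢᵀ p_{i+1}), where the first summand is omitted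
for the first vertex and the second for the last. -/
def lapAct (n : ℕ) (τ : Fin (n - 1) → Matrix (Fin 2) (Fin 2) ℝ)
    (p : Fin n → EuclideanSpace ℝ (Fin 2)) (i : Fin n) : EuclideanSpace ℝ (Fin 2) :=
  (if h : 0 < (i : ℕ) then
      p i - mv (τ ⟨(i : ℕ) - 1, by have := i.isLt; omega⟩)
        (p ⟨(i : ℕ) - 1, by have := i.isLt; omega⟩)
    else 0)
  + (if h : (i : ℕ) + 1 < n then
      p i - mv (τ ⟨(i : ℕ), by omega⟩)ᵀ (p ⟨(i : ℕ) + 1, h⟩)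
    else 0)

/-- The action of the augmented reflection-based Laplacian Q', with designated index ℓ and
unit normal n̂: (Q'p)ᵢ = (Qp)ᵢ + [i = ℓ]·2(n̂·p_ℓ)n̂. -/
def lapAugAct (n : ℕ) (τ : Fin (n - 1) → Matrix (Fin 2) (Fin 2) ℝ) (ℓ : Fin n)
    (nh : EuclideanSpace ℝ (Fin 2)) (p : Fin n → EuclideanSpace ℝ (Fin 2)) (i : Fin n) :
    EuclideanSpace ℝ (Fin 2) :=
  lapAct n τ p i + if i = ℓ then (2 * (inner ℝ nh (p ℓ) : ℝ)) • nh else 0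

/-- V₀ = (S₁ L̂, …, Sₙ L̂). -/
def V0 {n : ℕ} (S : Fin n → Matrix (Fin 2) (Fin 2) ℝ) (L : EuclideanSpace ℝ (Fin 2)) : Cfg n :=
  WithLp.toLp 2 (fun (x : Fin n × Fin 2) => mv (S x.1) L x.2)

/-- Left endpoint of edge e of the path graph, as a vertex. -/
def eL {n : ℕ} (e : Fin (n - 1)) : Fin n := ⟨e, by have := e.isLt; omega⟩
/-- Right endpoint of edge e of the path graph, as a vertex. -/
def eR {n : ℕ} (e : Fin (n - 1)) : Fin n := ⟨(e : ℕ) + 1, by have := e.isLt; omega⟩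

lemma mv_mv (M N : Matrix (Fin 2) (Fin 2) ℝ) (v : EuclideanSpace ℝ (Fin 2)) :
    mv M (mv N v) = mv (M * N) v := by
  simp only [mv, WithLp.ofLp_toLp, mulVec_mulVec]

lemma mv_one (v : EuclideanSpace ℝ (Fin 2)) : mv 1 v = v := by
  simp [mv]

lemma eq_mv_transpose_iff {M : Matrix (Fin 2) (Fin 2) ℝ} (hM : Mᵀ * M = 1)
    (u v : EuclideanSpace ℝ (Fin 2)) : u = mv Mᵀ v ↔ v = mv M u := by
  constructor <;> rintro rfl
  · rw [mv_mv, mul_eq_one_comm.mp hM, mv_one]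
  · rw [mv_mv, hM, mv_one]

lemma mvC_eq_zero_iff {n : ℕ} {M : Matrix (Fin n × Fin 2) (Fin n × Fin 2) ℝ} {p : Cfg n}
    {f : Fin n → EuclideanSpace ℝ (Fin 2)} (hM : ∀ i a, mvC M p (i, a) = f i a) :
    mvC M p = 0 ↔ ∀ i, f i = 0 := by
  constructor
  · intro h i
    ext a
    simpa [h] using (hM i a).symm
  · intro h
    ext ⟨i, a⟩
    simp [hM, h]

section PathLaplacian

@[simp] lemma coe_eL {n : ℕ} (e : Fin (n - 1)) : (eL e : ℕ) = e := rfl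

variable {n : ℕ} {τ : Fin (n - 1) → Matrix (Fin 2) (Fin 2) ℝ} (hτ : ∀ e, (τ e)ᵀ * τ e = 1)
  {q : Fin n → EuclideanSpace ℝ (Fin 2)}

include hτ in
lemma lapAct_eq_zero_of_forall_edge (h : ∀ e, q (eR e) = mv (τ e) (q (eL e))) (i : Fin n) :
    lapAct n τ q i = 0 := by
  have incoming (hi : 0 < (i : ℕ)) :
      q i - mv (τ ⟨i - 1, by omega⟩) (q ⟨i - 1, by omega⟩) = 0 := by
    simpa [eL, eR, Nat.sub_add_cancel hi, sub_eq_zero] using h ⟨i - 1, by omega⟩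
  have outgoing (hi : (i : ℕ) + 1 < n) : q i - mv (τ ⟨i, by omega⟩)ᵀ (q ⟨i + 1, hi⟩) = 0 :=
    sub_eq_zero.mpr ((eq_mv_transpose_iff (hτ _) _ _).mpr (h ⟨i, by omega⟩))
  unfold lapAct
  split_ifs with h₁ <;> simp [incoming, outgoing, h₁]

include hτ in
lemma edge_of_lapAct_eq_zero (e : Fin (n - 1)) (hQ : lapAct n τ q (eL e) = 0)
    (incoming : ∀ he : 0 < (e : ℕ),
      q (eL e) = mv (τ ⟨e - 1, by omega⟩) (q ⟨e - 1, by omega⟩)) :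
    q (eR e) = mv (τ e) (q (eL e)) := by
  have outgoing : q (eL e) - mv (τ e)ᵀ (q (eR e)) = 0 := by
    unfold lapAct at hQ
    rw [dif_pos (show (eL e : ℕ) + 1 < n by simp; omega)] at hQ
    split_ifs at hQ with he
    · simp only [coe_eL, sub_eq_zero.mpr (incoming he), zero_add] at hQ
      exact hQ
    · simp only [zero_add] at hQ
      exact hQ
  exact (eq_mv_transpose_iff (hτ e) _ _).mp (sub_eq_zero.mp outgoing)

include hτ in
lemma forall_edge_of_lapAct_eq_zero (hQ : ∀ i, lapAct n τ q i = 0) (e : Fin (n - 1)) :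
    q (eR e) = mv (τ e) (q (eL e)) := by
  obtain ⟨k, hk⟩ := e
  induction k with
  | zero => exact edge_of_lapAct_eq_zero hτ _ (hQ _) (fun he => absurd he (lt_irrefl 0))
  | succ k ih => exact edge_of_lapAct_eq_zero hτ _ (hQ _) (fun _ => ih (by omega))

include hτ in
lemma forall_lapAct_eq_zero_iff :
    (∀ i, lapAct n τ q i = 0) ↔ ∀ e, q (eR e) = mv (τ e) (q (eL e)) :=
  ⟨forall_edge_of_lapAct_eq_zero hτ, lapAct_eq_zero_of_forall_edge hτ⟩

end PathLaplacian

theorem stmt7_general (n : ℕ)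
    (τ : Fin (n - 1) → Matrix (Fin 2) (Fin 2) ℝ)
    (hτ : ∀ e, (τ e)ᵀ * τ e = 1)
    (Qm : Matrix (Fin n × Fin 2) (Fin n × Fin 2) ℝ)
    (hQm : ∀ (p : Cfg n) (i : Fin n) (a : Fin 2),
      mvC Qm p (i, a) = lapAct n τ (blk p) i a) :
    ∀ p : Cfg n, mvC Qm p = 0 ↔ ∀ e : Fin (n - 1), blk p (eR e) = mv (τ e) (blk p (eL e)) :=
  fun p => (mvC_eq_zero_iff (hQm p)).trans (forall_lapAct_eq_zero_iff hτ)

/-- For the matrix-weighted Laplacian Q, Qp = 0 if and only if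
p_{i+1} = τᵢpᵢ for all i = 1, …, n−1: the kernel is exactly the set of configurations
satisfying all the inter-agent symmetry relations encoded on the edges. -/
theorem stmt7 (n : ℕ) (hn : 2 ≤ n)
    (τ : Fin (n - 1) → Matrix (Fin 2) (Fin 2) ℝ)
    (hτ : ∀ e, (τ e)ᵀ * τ e = 1)
    (Qm : Matrix (Fin n × Fin 2) (Fin n × Fin 2) ℝ)
    (hQm : ∀ (p : Cfg n) (i : Fin n) (a : Fin 2),
      mvC Qm p (i, a) = lapAct n τ (blk p) i a) :
    ∀ p : Cfg n, mvC Qm p = 0 ↔ ∀ e : Fin (n - 1), blk p (eR e) = mv (τ e) (blk p (eL e)) :=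
  stmt7_general n τ hτ Qm hQm
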